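/- Let F : C → B be a covering of k-categories with C connected, and suppose that for some object b of B the fibre F⁻¹(b) is a singleton. Then every fibre of F is a singleton, and F is an isomorphism of k-categories: F is bijective on objects and induces a k-linear bijection C(x,y) → B(F(x),F(y)) for all objects x, y of C. -/

import Mathlib

open CategoryTheory

universe w v u

section CoveringDefs

variable (k : Type w) [CommRing k]

/-- A functor between `k`-linear categories is `k`-linear:
it is additive and commutes with the scalar action on morphisms. -/
def IsLinearFunctor {C : Type u} [Category.{v} C] [Preadditive C] [CategoryTheory.Linear k C]
    {B : Type u} [Category.{v} B] [Preadditive B] [CategoryTheory.Linear k B]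
    (F : C ⥤ B) : Prop :=
  (∀ (x y : C) (f g : x ⟶ y), F.map (f + g) = F.map f + F.map g) ∧
  (∀ (x y : C) (r : k) (f : x ⟶ y), F.map (r • f) = r • F.map f)

variable {C : Type u} [Category.{v} C] [Preadditive C] [CategoryTheory.Linear k C]
variable {B : Type u} [Category.{v} B] [Preadditive B] [CategoryTheory.Linear k B]

/-- The canonical map `⊕_{y ∈ F⁻¹(c)} C(x,y) →+ B(F(x),c)` induced by `F`
on the source star. -/
noncomputable def starOutHom (F : C ⥤ B) (hF : IsLinearFunctor k F) (x : C) (c : B) :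
    (DirectSum {y : C // F.obj y = c} (fun y => (x ⟶ y.1))) →+ (F.obj x ⟶ c) := by
  classical
  exact DirectSum.toAddMonoid fun y =>
    AddMonoidHom.mk' (fun f => F.map f ≫ eqToHom y.2)
      (fun f g => by rw [hF.1 _ _ f g, Preadditive.add_comp])

/-- The canonical map `⊕_{y ∈ F⁻¹(c)} C(y,x) →+ B(c,F(x))` induced by `F`
on the target star. -/
noncomputable def starInHom (F : C ⥤ B) (hF : IsLinearFunctor k F) (x : C) (c : B) :
    (DirectSum {y : C // F.obj y = c} (fun y => (y.1 ⟶ x))) →+ (c ⟶ F.obj x) := by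
  classical
  exact DirectSum.toAddMonoid fun y =>
    AddMonoidHom.mk' (fun f => eqToHom y.2.symm ≫ F.map f)
      (fun f g => by rw [hF.1 _ _ f g, Preadditive.comp_add])

/-- `F : C ⥤ B` is a covering of `k`-categories: it is a `k`-linear functor,
surjective on objects, inducing bijections on all source and target stars. -/
def IsCovering (F : C ⥤ B) : Prop :=
  ∃ hF : IsLinearFunctor k F,
    Function.Surjective F.obj ∧
    (∀ (x : C) (c : B), Function.Bijective (starOutHom k F hF x c)) ∧
    (∀ (x : C) (c : B), Function.Bijective (starInHom k F hF x c))

end CoveringDefs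

/-- A `k`-category is connected if the equivalence relation generated by
"there is a nonzero morphism from `x` to `y`" relates any two objects. -/
def IsConnectedKCat (C : Type u) [Category.{v} C] [Preadditive C] : Prop :=
  ∀ x y : C, Relation.EqvGen (fun a b : C => ∃ f : a ⟶ b, f ≠ 0) x y

section GaloisDefs

variable (k : Type w) [CommRing k]
variable {C : Type u} [Category.{v} C] [Preadditive C] [CategoryTheory.Linear k C]
variable {B : Type u} [Category.{v} B] [Preadditive B] [CategoryTheory.Linear k B]
variable {D : Type u} [Category.{v} D] [Preadditive D] [CategoryTheory.Linear k D]

/-- `H` belongs to `Aut₁ F`: it is an invertible `k`-linear endofunctor with `F ∘ H = F`. -/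
def MemAut1 (F : C ⥤ B) (H : C ⥤ C) : Prop :=
  IsLinearFunctor k H ∧
  (∃ Hinv : C ⥤ C, H ⋙ Hinv = 𝟭 C ∧ Hinv ⋙ H = 𝟭 C) ∧
  H ⋙ F = F

/-- A covering is Galois if its source is connected and `Aut₁ F` acts transitively
on some fibre. -/
def IsGaloisCovering (F : C ⥤ B) : Prop :=
  IsCovering k F ∧ IsConnectedKCat C ∧
  ∃ b₀ : B, ∀ x y : C, F.obj x = b₀ → F.obj y = b₀ →
    ∃ H : C ⥤ C, MemAut1 k F H ∧ H.obj x = y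

/-- A morphism `(H, J)` of coverings from `F : C ⥤ B` to `G : D ⥤ B`:
`H` and `J` are `k`-linear, `J` is an isomorphism which is the identity on objects,
and `G ∘ H = J ∘ F`. -/
def IsCoveringMorphism (F : C ⥤ B) (G : D ⥤ B) (H : C ⥤ D) (J : B ⥤ B) : Prop :=
  IsLinearFunctor k H ∧ IsLinearFunctor k J ∧
  (∃ Jinv : B ⥤ B, J ⋙ Jinv = 𝟭 B ∧ Jinv ⋙ J = 𝟭 B) ∧
  (∀ b : B, J.obj b = b) ∧
  H ⋙ G = F ⋙ J

end GaloisDefs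

/-- A universal covering: a Galois covering `U` such that for every Galois covering
`F : C ⥤ B` and every pair of objects `u₀`, `c₀` above the same object of `B`,
there is a unique `k`-linear functor `H` with `F ∘ H = U` and `H u₀ = c₀`. -/
def IsUniversalCovering (k : Type w) [CommRing k]
    {U' : Type u} [Category.{v} U'] [Preadditive U'] [CategoryTheory.Linear k U']
    {B : Type u} [Category.{v} B] [Preadditive B] [CategoryTheory.Linear k B]
    (U : U' ⥤ B) : Prop :=
  IsGaloisCovering k U ∧
  ∀ (C : Type u) [Category.{v} C] [Preadditive C] [CategoryTheory.Linear k C]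
    (F : C ⥤ B), IsGaloisCovering k F →
    ∀ (u₀ : U') (c₀ : C), U.obj u₀ = F.obj c₀ →
      ∃! H : U' ⥤ C, IsLinearFunctor k H ∧ H ⋙ F = U ∧ H.obj u₀ = c₀

/-- Given a functor `F : C ⥤ B`, a choice `x` of objects of `C` above each object of `B`,
and an endofunctor `H` of `C`, the subset `Z_H(c,b) = F(C(x_b, H x_c))` of `B(b,c)`. -/
def gradeSet {C : Type u} [Category.{v} C] {B : Type u} [Category.{v} B]
    (F : C ⥤ B) (x : B → C) (H : C ⥤ C) (b c : B) : Set (b ⟶ c) :=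
  {g | ∃ (h₁ : b = F.obj (x b)) (h₂ : F.obj (H.obj (x c)) = c)
        (f : x b ⟶ H.obj (x c)), g = eqToHom h₁ ≫ F.map f ≫ eqToHom h₂}

/-- The homogeneous component `Z_H(c,b)` as a `k`-submodule of `B(b,c)`. -/
noncomputable def gradeSubmodule (k : Type w) [CommRing k]
    {C : Type u} [Category.{v} C]
    {B : Type u} [Category.{v} B] [Preadditive B] [CategoryTheory.Linear k B]
    (F : C ⥤ B) (x : B → C) (H : C ⥤ C) (b c : B) : Submodule k (b ⟶ c) :=
  Submodule.span k (gradeSet F x H b c)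

/-! If `z` is alone in its fibre, the star bijections at `z` have a single summand, so `F` is
bijective on `C(z, w)` and on `C(w, z)` for every `w`. A nonzero `f : z ⟶ w` then makes `w`
alone in its fibre: for `w'` with `F w' = F w`, the morphism `F f`, read in `B(F z, F w')`, lifts
to some `f' : z ⟶ w'`, and injectivity of the star map at `(z, F w)` identifies `f'` in the
summand of `w'` with `f` in the summand of `w`; as `f ≠ 0`, this forces `w' = w`. The dual
argument handles `f : w ⟶ z`, and connectedness spreads the property to every object. -/

theorem DirectSum.bijective_comp_of_subsingleton {ι : Type*} [DecidableEq ι] [Subsingleton ι]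
    {M : ι → Type*} [∀ i, AddCommMonoid (M i)] {N : Type*} [AddCommMonoid N]
    {φ : DirectSum ι M →+ N} (hφ : Function.Bijective φ) (i₀ : ι) :
    Function.Bijective (φ.comp (DirectSum.of M i₀)) := by
  refine ⟨hφ.1.comp (DirectSum.of_injective i₀), fun n => ?_⟩
  obtain ⟨d, rfl⟩ := hφ.2 n
  refine ⟨d i₀, congrArg φ (DFinsupp.ext fun i => ?_)⟩
  obtain rfl := Subsingleton.elim i₀ i
  exact DirectSum.of_eq_same _ _

theorem Relation.EqvGen.iff_of_rel {α : Type*} {r : α → α → Prop} {P : α → Prop}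
    (h : ∀ a b, r a b → (P a ↔ P b)) {a b : α} (hab : Relation.EqvGen r a b) : P a ↔ P b :=
  (InvImage.equivalence Iff P ⟨Iff.refl, Iff.symm, Iff.trans⟩).eqvGen_iff.1 (hab.mono h)

def IsAloneInFibre {C B : Type*} [Category C] [Category B] (F : C ⥤ B) (z : C) : Prop :=
  ∀ u, F.obj u = F.obj z → u = z

section Covering

variable {k : Type w} [CommRing k]
variable {C : Type u} [Category.{v} C] [Preadditive C] [CategoryTheory.Linear k C]
variable {B : Type u} [Category.{v} B] [Preadditive B] [CategoryTheory.Linear k B]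
variable {F : C ⥤ B}

@[simp]
theorem starOutHom_of [DecidableEq C] (hL : IsLinearFunctor k F) (x : C) (c : B)
    (y : {y : C // F.obj y = c}) (f : x ⟶ y.1) :
    starOutHom k F hL x c (DirectSum.of _ y f) = F.map f ≫ eqToHom y.2 :=
  DirectSum.toAddMonoid_of (fun y => AddMonoidHom.mk' (fun f => F.map f ≫ eqToHom y.2)
    (fun f g => by rw [hL.1 _ _ f g, Preadditive.add_comp])) y f

@[simp]
theorem starInHom_of [DecidableEq C] (hL : IsLinearFunctor k F) (x : C) (c : B)
    (y : {y : C // F.obj y = c}) (f : y.1 ⟶ x) :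
    starInHom k F hL x c (DirectSum.of _ y f) = eqToHom y.2.symm ≫ F.map f :=
  DirectSum.toAddMonoid_of (fun y => AddMonoidHom.mk' (fun f => eqToHom y.2.symm ≫ F.map f)
    (fun f g => by rw [hL.1 _ _ f g, Preadditive.comp_add])) y f

namespace IsCovering

theorem bijective_map_from (hF : IsCovering k F) {z : C} (hz : IsAloneInFibre F z) (w : C) :
    Function.Bijective (fun f : z ⟶ w => F.map f) := by
  classical
  obtain ⟨hL, -, -, hin⟩ := hF
  have : Subsingleton {u : C // F.obj u = F.obj z} :=
    ⟨fun a b => Subtype.ext ((hz _ a.2).trans (hz _ b.2).symm)⟩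
  convert DirectSum.bijective_comp_of_subsingleton (hin w (F.obj z)) ⟨z, rfl⟩ using 1
  funext f
  rw [AddMonoidHom.comp_apply, starInHom_of]
  simp

theorem bijective_map_to (hF : IsCovering k F) {z : C} (hz : IsAloneInFibre F z) (w : C) :
    Function.Bijective (fun f : w ⟶ z => F.map f) := by
  classical
  obtain ⟨hL, -, hout, -⟩ := hF
  have : Subsingleton {u : C // F.obj u = F.obj z} :=
    ⟨fun a b => Subtype.ext ((hz _ a.2).trans (hz _ b.2).symm)⟩
  convert DirectSum.bijective_comp_of_subsingleton (hout w (F.obj z)) ⟨z, rfl⟩ using 1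
  funext f
  rw [AddMonoidHom.comp_apply, starOutHom_of]
  simp

theorem isAloneInFibre_of_ne_zero_from (hF : IsCovering k F) {z w : C}
    (hz : IsAloneInFibre F z) {f : z ⟶ w} (hf : f ≠ 0) : IsAloneInFibre F w := by
  classical
  intro w' hw'
  by_contra hne
  obtain ⟨f', hf'⟩ := (hF.bijective_map_from hz w').2 (F.map f ≫ eqToHom hw'.symm)
  obtain ⟨hL, -, hout, -⟩ := hF
  have hof : DirectSum.of (fun u : {u // F.obj u = F.obj w} => z ⟶ u.1) ⟨w', hw'⟩ f' =
      DirectSum.of _ ⟨w, rfl⟩ f :=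
    (hout z (F.obj w)).1 (by rw [starOutHom_of, starOutHom_of, show F.map f' = _ from hf']; simp)
  have hw := DFunLike.congr_fun hof ⟨w, rfl⟩
  rw [DirectSum.of_eq_same, DirectSum.of_eq_of_ne _ _ _ (by simpa using Ne.symm hne)] at hw
  exact hf hw.symm

theorem isAloneInFibre_of_ne_zero_to (hF : IsCovering k F) {z w : C}
    (hz : IsAloneInFibre F z) {f : w ⟶ z} (hf : f ≠ 0) : IsAloneInFibre F w := by
  classical
  intro w' hw'
  by_contra hne
  obtain ⟨f', hf'⟩ := (hF.bijective_map_to hz w').2 (eqToHom hw' ≫ F.map f)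
  obtain ⟨hL, -, -, hin⟩ := hF
  have hof : DirectSum.of (fun u : {u // F.obj u = F.obj w} => u.1 ⟶ z) ⟨w', hw'⟩ f' =
      DirectSum.of _ ⟨w, rfl⟩ f :=
    (hin z (F.obj w)).1 (by rw [starInHom_of, starInHom_of, show F.map f' = _ from hf']; simp)
  have hw := DFunLike.congr_fun hof ⟨w, rfl⟩
  rw [DirectSum.of_eq_same, DirectSum.of_eq_of_ne _ _ _ (by simpa using Ne.symm hne)] at hw
  exact hf hw.symm

theorem isAloneInFibre_iff_of_eqvGen (hF : IsCovering k F) {a c : C}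
    (h : Relation.EqvGen (fun a b : C => ∃ f : a ⟶ b, f ≠ 0) a c) :
    IsAloneInFibre F a ↔ IsAloneInFibre F c :=
  h.iff_of_rel fun _ _ ⟨_, hf⟩ =>
    ⟨fun ha => hF.isAloneInFibre_of_ne_zero_from ha hf,
      fun hc => hF.isAloneInFibre_of_ne_zero_to hc hf⟩

end IsCovering

end Covering

theorem covering_iso_of_singleton_fibre (k : Type w) [CommRing k]
    {C : Type u} [Category.{v} C] [Preadditive C] [CategoryTheory.Linear k C]
    {B : Type u} [Category.{v} B] [Preadditive B] [CategoryTheory.Linear k B]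
    (F : C ⥤ B) (hF : IsCovering k F) (hC : IsConnectedKCat C)
    (b : B) (hb : ∃! x : C, F.obj x = b) :
    (∀ c : B, ∃! x : C, F.obj x = c) ∧
    Function.Bijective F.obj ∧
    ∀ x y : C, Function.Bijective (fun f : x ⟶ y => F.map f) := by
  obtain ⟨x₀, rfl, hx₀⟩ := hb
  have alone : ∀ z, IsAloneInFibre F z := fun z =>
    (hF.isAloneInFibre_iff_of_eqvGen (hC z x₀)).2 hx₀
  have injective : Function.Injective F.obj := fun x y h => alone y x h
  have surjective : Function.Surjective F.obj := hF.2.1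
  refine ⟨fun c => ?_, ⟨injective, surjective⟩, fun x => hF.bijective_map_from (alone x)⟩
  obtain ⟨x, rfl⟩ := surjective c
  exact ⟨x, rfl, fun y h => injective h⟩
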